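/- Let a > 0, r > 0 and let g : ℝ → ℂ be a Schwartz function. Define the dilation (h_r g)(x) = g(r x). Then for every z ∈ ℂ, [B_{a/2}(h_r g)](z) = √( 2/(r²+1) ) · e^{−(a/4)·z²·(r²−1)/(r²+1)} · ∫_ℂ (B_{a/2}g)(−i w) · e^{(a/4)·conj(w)²·(1−r²)/(r²+1)} · e^{i a r z conj(w)/(r²+1)} dλ_{a/2}(w), and the integral over ℂ converges. -/

import Mathlib

open Complex Real SchwartzMap MeasureTheory

/-- The (parametrized) Bargmann transform `B_{a/2}`:
`(B_{a/2}f)(z) = (a/π)^{1/4} ∫_ℝ f(x) e^{axz − (a/2)x² − (a/4)z²} dx`. -/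
noncomputable def bargmann (a : ℝ) (f : ℝ → ℂ) (z : ℂ) : ℂ :=
  ((a / Real.pi) ^ ((1 : ℝ) / 4) : ℝ) *
    ∫ x : ℝ, f x * Complex.exp (a * x * z - (a / 2) * x ^ 2 - (a / 4) * z ^ 2)

/-- The density of the Gaussian measure `dλ_{a/2}` on `ℂ` with respect to Lebesgue
measure on `ℂ ≅ ℝ²`. -/
noncomputable def gaussianDensity (a : ℝ) (w : ℂ) : ℝ :=
  (a / (2 * Real.pi)) * Real.exp (-(a / 2) * ‖w‖ ^ 2)

/-!
Expanding `(B_{a/2} g)(-i w)` as an integral over `t ∈ ℝ` and exchanging the two integrations,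
the `w`-integral becomes the integral over `ℂ` of the exponential of a quadratic polynomial in
`w` and `conj w`. Completing the square first in `Im w`, then in `Re w`, evaluates it in closed
form, leaving `∫ g(t) e^{φ(t)} dt` for an explicit quadratic `φ`; the substitution `t = r x` turns
this into `B_{a/2}(h_r g)(z)`.
-/

open ComplexConjugate

theorem cpow_one_half_ofReal {x : ℝ} (hx : 0 ≤ x) : (x : ℂ) ^ (1 / 2 : ℂ) = (√x : ℝ) := by
  rw [Real.sqrt_eq_rpow, ofReal_cpow hx]
  norm_num

theorem re_quadratic_complex_le (α β c : ℝ) (p q d w : ℂ) :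
    (α * w ^ 2 + β * conj w ^ 2 - c * w * conj w + p * w + q * conj w + d).re ≤
      -(c - |α + β|) * ‖w‖ ^ 2 + inner ℝ (conj p + q) w + d.re := by
  have hw : ‖w‖ ^ 2 = w.re ^ 2 + w.im ^ 2 := by rw [Complex.sq_norm, Complex.normSq_apply]; ring
  have habs : (α + β) * (w.re ^ 2 - w.im ^ 2) ≤ |α + β| * (w.re ^ 2 + w.im ^ 2) := by
    nlinarith [le_abs_self (α + β), neg_abs_le (α + β), sq_nonneg w.re, sq_nonneg w.im]
  simp only [hw, Complex.inner, add_re, sub_re, mul_re, ofReal_re, ofReal_im, conj_re, conj_im,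
    sq, add_im, mul_im, map_add]
  nlinarith [habs]

theorem integrable_cexp_quadratic_complex {α β c : ℝ} (h : |α + β| < c) (p q d : ℂ) :
    Integrable fun w : ℂ =>
      cexp (α * w ^ 2 + β * conj w ^ 2 - c * w * conj w + p * w + q * conj w + d) := by
  have hb : 0 < ((c - |α + β| : ℝ) : ℂ).re := by simpa using h
  refine ((GaussianFourier.integrable_cexp_neg_mul_sq_norm_add hb 1 (conj p + q)).norm.mul_const
    ‖cexp d‖).mono' (by fun_prop) (.of_forall fun w => ?_)
  rw [← norm_mul, ← Complex.exp_add, Complex.norm_exp, Complex.norm_exp]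
  refine Real.exp_le_exp.2 <| (re_quadratic_complex_le α β c p q d w).trans_eq ?_
  simp [← ofReal_pow]

theorem integral_complex_eq_integral_integral {E : Type*} [NormedAddCommGroup E]
    [NormedSpace ℝ E] {f : ℂ → E} (hf : Integrable f) :
    ∫ w, f w = ∫ x : ℝ, ∫ y : ℝ, f (x + y * I) := by
  have hmp := Complex.volume_preserving_equiv_real_prod.symm
  have hint := (hmp.integrable_comp_emb measurableEquivRealProd.symm.measurableEmbedding).2 hf
  rw [Measure.volume_eq_prod] at hint
  rw [← hmp.integral_comp', Measure.volume_eq_prod]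
  exact (integral_prod _ hint).trans (by simp [mk_eq_add_mul_I])

theorem integral_cexp_quadratic_complex {α β c : ℝ} (h : |α + β| < c) (p q d : ℂ) :
    ∫ w : ℂ, cexp (α * w ^ 2 + β * conj w ^ 2 - c * w * conj w + p * w + q * conj w + d) =
      π / (√(c ^ 2 - 4 * α * β) : ℝ) *
        cexp (d + (β * p ^ 2 + α * q ^ 2 + c * p * q) / ((c ^ 2 - 4 * α * β : ℝ) : ℂ)) := by
  have hs : 0 < α + β + c := by linarith [neg_abs_le (α + β)]
  have hD : 0 < c ^ 2 - 4 * α * β := by nlinarith [abs_lt.1 h, sq_nonneg (α - β)]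
  set s := α + β + c with hs_def
  set D := c ^ 2 - 4 * α * β with hD_def
  have hs' : (α + β + c : ℂ) ≠ 0 := by exact_mod_cast hs.ne'
  have hD' : (c ^ 2 - 4 * α * β : ℂ) ≠ 0 := by exact_mod_cast hD.ne'
  rw [integral_complex_eq_integral_integral (integrable_cexp_quadratic_complex h p q d)]
  have h_exp_y (x y : ℝ) : α * ((x : ℂ) + y * I) ^ 2 + β * conj ((x : ℂ) + y * I) ^ 2
      - c * ((x : ℂ) + y * I) * conj ((x : ℂ) + y * I) + p * ((x : ℂ) + y * I)
      + q * conj ((x : ℂ) + y * I) + d =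
      -(s : ℂ) * y ^ 2 + I * (2 * (α - β) * x + (p - q)) * y
        + ((α + β - c) * x ^ 2 + (p + q) * x + d) := by
    simp only [map_add, map_mul, conj_ofReal, conj_I, hs_def]
    push_cast
    linear_combination (↑α + ↑β + ↑c) * (y : ℂ) ^ 2 * I_sq
  have h_exp_x (x : ℝ) : ((α + β - c) * x ^ 2 + (p + q) * x + d)
      - (I * (2 * (α - β) * x + (p - q))) ^ 2 / (4 * -(s : ℂ)) =
      -((D : ℂ) / s) * x ^ 2 + ((p + q) - (α - β) * (p - q) / s) * x
        + (d - (p - q) ^ 2 / (4 * s)) := by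
    rw [mul_pow, I_sq, hD_def, hs_def]
    push_cast
    field_simp
    ring
  have h_exp : (d - (p - q) ^ 2 / (4 * s))
      - ((p + q) - (α - β) * (p - q) / s) ^ 2 / (4 * -((D : ℂ) / s)) =
      d + (β * p ^ 2 + α * q ^ 2 + c * p * q) / D := by
    rw [hD_def, hs_def]
    push_cast
    field_simp
    ring
  have hb_y : (-(s : ℂ)).re < 0 := by simpa using hs
  have hb_x : (-((D : ℂ) / s)).re < 0 := by
    simpa [← ofReal_div] using div_pos hD hs
  simp_rw [h_exp_y, integral_cexp_quadratic hb_y, h_exp_x, integral_const_mul,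
    integral_cexp_quadratic hb_x, h_exp, ← mul_assoc]
  congr 1
  rw [neg_neg, neg_neg, ← ofReal_div, ← ofReal_div, ← ofReal_div,
    cpow_one_half_ofReal (by positivity), cpow_one_half_ofReal (by positivity), ← ofReal_mul,
    ← ofReal_div, ← Real.sqrt_mul (by positivity)]
  congr 1
  rw [show π / s * (π / (D / s)) = π ^ 2 / D by field_simp, Real.sqrt_div' _ hD.le,
    Real.sqrt_sq pi_pos.le]

theorem integrable_mul_cexp_bargmann_kernel {f : ℝ → ℂ} (hf : Integrable f) {a α β c : ℝ}
    (ha : 0 ≤ a) (h : |α + β - a / 4| < c - a / 4) (q : ℂ) :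
    Integrable (Function.uncurry fun (w : ℂ) (t : ℝ) =>
      f t * cexp (α * w ^ 2 + β * conj w ^ 2 - c * w * conj w + (-I * a * t) * w + q * conj w
        + -(a / 2) * t ^ 2)) ((volume : Measure ℂ).prod volume) := by
  have h' : |(α - a / 8) + (β - a / 8)| < c - a / 4 := by convert h using 2; ring
  refine ((integrable_cexp_quadratic_complex h' 0 q 0).norm.mul_prod hf.norm).mono'
    ?_ (.of_forall fun ⟨w, t⟩ => ?_)
  · simp only [Function.uncurry_def]
    exact hf.aestronglyMeasurable.comp_snd.fun_mul (Continuous.aestronglyMeasurable (by fun_prop))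
  -- the `t`-dependent part of the exponent is a Gaussian in `t - Im w`, bounded by `1`
  have hre : (α * w ^ 2 + β * conj w ^ 2 - c * w * conj w + (-I * a * t) * w + q * conj w
        + -(a / 2) * t ^ 2 : ℂ).re =
      ((α - a / 8 : ℝ) * w ^ 2 + (β - a / 8 : ℝ) * conj w ^ 2 - (c - a / 4 : ℝ) * w * conj w
        + 0 * w + q * conj w + 0 : ℂ).re - a / 2 * (t - w.im) ^ 2 := by
    simp only [add_re, sub_re, mul_re, neg_re, ofReal_re, ofReal_im, conj_re, conj_im, I_re, I_im,
      sq, mul_im, neg_im, zero_re, zero_im, div_ofNat_re]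
    ring
  rw [Function.uncurry_apply_pair, norm_mul, mul_comm, norm_exp, norm_exp, hre]
  gcongr
  exact sub_le_self _ (by positivity)

theorem bargmann_neg_I_mul_weighted_eq_integral (a r : ℝ) (f : ℝ → ℂ) (z w : ℂ) :
    bargmann a f (-I * w) * cexp (a / 4 * conj w ^ 2 * ((1 - r ^ 2) / (r ^ 2 + 1))) *
        cexp (I * a * r * z * conj w / (r ^ 2 + 1)) * (gaussianDensity a w : ℂ) =
      ((a / π) ^ ((1 : ℝ) / 4) * (a / (2 * π)) : ℝ) *
        ∫ t : ℝ, f t * cexp (((a / 4 : ℝ) : ℂ) * w ^ 2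
          + ((a / 4 * ((1 - r ^ 2) / (r ^ 2 + 1)) : ℝ) : ℂ) * conj w ^ 2
          - ((a / 2 : ℝ) : ℂ) * w * conj w + (-I * a * t) * w
          + (I * a * r * z / (r ^ 2 + 1)) * conj w + -(a / 2) * t ^ 2) := by
  have h_exp (t : ℝ) : (a * t * (-I * w) - a / 2 * t ^ 2 - a / 4 * (-I * w) ^ 2)
      + a / 4 * conj w ^ 2 * ((1 - r ^ 2) / (r ^ 2 + 1))
      + I * a * r * z * conj w / (r ^ 2 + 1) + -(a / 2) * (‖w‖ : ℂ) ^ 2 =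
      ((a / 4 : ℝ) : ℂ) * w ^ 2 + ((a / 4 * ((1 - r ^ 2) / (r ^ 2 + 1)) : ℝ) : ℂ) * conj w ^ 2
        - ((a / 2 : ℝ) : ℂ) * w * conj w + (-I * a * t) * w
        + (I * a * r * z / (r ^ 2 + 1)) * conj w + -(a / 2) * t ^ 2 := by
    rw [← mul_conj']
    push_cast
    linear_combination (-(a : ℂ) / 4 * w ^ 2) * I_sq
  simp only [bargmann, ← integral_mul_const, ← integral_const_mul]
  refine integral_congr_ae (.of_forall fun t => ?_)
  dsimp only
  rw [← h_exp t, Complex.exp_add, Complex.exp_add, Complex.exp_add, gaussianDensity]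
  push_cast
  ring

theorem bargmann_comp_mul_left (a : ℝ) {r : ℝ} (hr : r ≠ 0) (f : ℝ → ℂ) (z : ℂ) :
    bargmann a (fun x => f (r * x)) z =
      ((a / π) ^ ((1 : ℝ) / 4) * |r⁻¹| : ℝ) *
        ∫ t : ℝ, f t * cexp (a * (t / r) * z - a / 2 * (t / r) ^ 2 - a / 4 * z ^ 2) := by
  have h := Measure.integral_comp_mul_left
    (fun t : ℝ => f t * cexp (a * (t / r) * z - a / 2 * (t / r) ^ 2 - a / 4 * z ^ 2)) r
  simp only [ofReal_mul, mul_div_cancel_left₀ _ (ofReal_ne_zero.2 hr)] at h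
  rw [bargmann, h, real_smul, ofReal_mul, mul_assoc]

-- `c ^ 2 - 4 * α * β` at the parameters `α = a / 4`, `β = a / 4 * (1 - r²) / (r² + 1)`, `c = a / 2`
-- of the Gaussian integral over `w`
theorem bargmann_dilation_discriminant (a r : ℝ) :
    (a / 2) ^ 2 - 4 * (a / 4) * (a / 4 * ((1 - r ^ 2) / (r ^ 2 + 1))) =
      (a * r / 2) ^ 2 * (2 / (r ^ 2 + 1)) := by
  field_simp
  ring

theorem bargmann_dilation_const {a r : ℝ} (ha : 0 < a) (hr : 0 < r) :
    √(2 / (r ^ 2 + 1)) * (a / (2 * π)) * (π / √((a * r / 2) ^ 2 * (2 / (r ^ 2 + 1)))) = r⁻¹ := by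
  have hs : 0 < √(2 / (r ^ 2 + 1)) := by positivity
  rw [Real.sqrt_mul' _ (by positivity), Real.sqrt_sq (by positivity)]
  field_simp

theorem bargmann_dilation_exponent {a r : ℝ} (hr : r ≠ 0) (z : ℂ) (t : ℝ) :
    -((a : ℂ) / 4) * z ^ 2 * (((r : ℂ) ^ 2 - 1) / ((r : ℂ) ^ 2 + 1)) +
      (-((a : ℂ) / 2) * (t : ℂ) ^ 2 +
        (((a / 4 * ((1 - r ^ 2) / (r ^ 2 + 1)) : ℝ) : ℂ) * (-I * a * t) ^ 2
          + ((a / 4 : ℝ) : ℂ) * (I * a * r * z / (r ^ 2 + 1)) ^ 2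
          + ((a / 2 : ℝ) : ℂ) * (-I * a * t) * (I * a * r * z / (r ^ 2 + 1))) /
        (((a * r / 2) ^ 2 * (2 / (r ^ 2 + 1)) : ℝ) : ℂ)) =
      a * (t / r) * z - a / 2 * (t / r) ^ 2 - a / 4 * z ^ 2 := by
  have hu : 1 + (r : ℂ) ^ 2 ≠ 0 := by exact_mod_cast (by positivity : 1 + r ^ 2 ≠ 0)
  have hr' : (r : ℂ) ≠ 0 := ofReal_ne_zero.2 hr
  push_cast
  ring_nf
  simp only [I_sq]
  field_simp
  ring

/-- For a Schwartz function `g` and `r > 0`, the Bargmann transform of the dilation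
`(h_r g)(x) = g(rx)` is given by an integral over `ℂ` against the Gaussian measure
`dλ_{a/2}`, and that integral converges. -/
theorem bargmann_dilation (a r : ℝ) (ha : 0 < a) (hr : 0 < r)
    (g : SchwartzMap ℝ ℂ) (z : ℂ) :
    MeasureTheory.Integrable
      (fun w : ℂ => bargmann a (fun x : ℝ => g x) (-Complex.I * w) *
        Complex.exp ((a / 4) * (starRingEnd ℂ) w ^ 2 * ((1 - r ^ 2) / (r ^ 2 + 1))) *
        Complex.exp (Complex.I * a * r * z * (starRingEnd ℂ) w / (r ^ 2 + 1)) *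
        (gaussianDensity a w : ℂ)) (volume : Measure ℂ) ∧
    bargmann a (fun x : ℝ => g (r * x)) z =
      (Real.sqrt (2 / (r ^ 2 + 1)) : ℂ) *
        Complex.exp (-(a / 4) * z ^ 2 * ((r ^ 2 - 1) / (r ^ 2 + 1))) *
        ∫ w : ℂ, bargmann a (fun x : ℝ => g x) (-Complex.I * w) *
          Complex.exp ((a / 4) * (starRingEnd ℂ) w ^ 2 * ((1 - r ^ 2) / (r ^ 2 + 1))) *
          Complex.exp (Complex.I * a * r * z * (starRingEnd ℂ) w / (r ^ 2 + 1)) *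
          (gaussianDensity a w : ℂ) := by
  have hκ : |(1 - r ^ 2) / (r ^ 2 + 1)| < 1 := by
    rw [abs_lt, lt_div_iff₀ (by positivity), div_lt_iff₀ (by positivity)]
    constructor <;> nlinarith [pow_pos hr 2]
  have h_kernel : |a / 4 + a / 4 * ((1 - r ^ 2) / (r ^ 2 + 1)) - a / 4| < a / 2 - a / 4 := by
    rw [add_sub_cancel_left, abs_mul, abs_of_pos (by positivity : 0 < a / 4)]
    nlinarith
  have h_gauss : |a / 4 + a / 4 * ((1 - r ^ 2) / (r ^ 2 + 1))| < a / 2 := by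
    rw [abs_lt] at hκ ⊢
    constructor <;> nlinarith
  have hker := integrable_mul_cexp_bargmann_kernel g.integrable ha.le h_kernel
    (I * a * r * z / (r ^ 2 + 1))
  simp_rw [bargmann_neg_I_mul_weighted_eq_integral]
  refine ⟨hker.integral_prod_left.const_mul _, ?_⟩
  rw [integral_const_mul, integral_integral_swap hker]
  simp_rw [integral_const_mul, integral_cexp_quadratic_complex h_gauss, bargmann_dilation_discriminant,
    bargmann_comp_mul_left a hr.ne', ← integral_const_mul]
  refine integral_congr_ae (.of_forall fun t => ?_)
  dsimp only
  rw [abs_inv, abs_of_pos hr, ← bargmann_dilation_const ha hr,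
    ← bargmann_dilation_exponent hr.ne' z t, Complex.exp_add]
  push_cast
  ring
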